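/- Let q = 4 and n = 1 + q^a + q^b + q^e + q^{e+k} with a, b, e, k positive integers. Then g_{n,q} ≡ S_a S_b + (S_a + S_b + S_e) S_k + S_e² (mod X^{q^e} − X). Moreover, if gcd(e, 2k) = 1 and (a = k or b = k), then g_{n,q} is a permutation polynomial of F_{q^e}. -/

import Mathlib

open Polynomial Finset

/-!
Since `c ^ 4 ^ i = c` on `F_4`, `(X + c) ^ n` factors as `∏ (X ^ 4 ^ d + c)` over
`d ∈ {0, a, b, e, e + k}`; summing over `c ∈ F_4` kills every power sum `∑ c ^ m`, `m ≤ 5`,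
except `∑ c ^ 3 = 1`, so the sum is the second elementary symmetric function of the five `X ^ 4 ^ d`.
Writing `X ^ 4 ^ d = X + S_d(X ^ 4 - X)` and using that `e_2` of five elements is translation
invariant in characteristic 2 gives `g = e_2(S_a, S_b, S_e, S_{e+k})`, and
`S_{e+k} ≡ S_e + S_k` modulo `X ^ 4 ^ e - X` gives the congruence.

If, say, `a = k`, then `g` acts on `F_{4^e}` as `f = S_k² + S_e S_k + S_e²`, where `S_e` is the
trace to `F_4`. As `e` is odd and `k (k + 1)` is even, `S_e ∘ f = S_e²`, so `f x = f y` forces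
`S_e x = S_e y = t`. Then `z = x - y` satisfies `S_k(z) (S_k(z) + t) = 0`, so `S_k(z) ∈ F_4` and
hence `z ^ 4 ^ k = z`; together with `z ^ 4 ^ e = z` and `gcd(e, k) = 1` this puts `z` in `F_4`,
and `z = S_e(z) = 0`.
-/

lemma pow_pow_eq_self {M : Type*} [Monoid M] {t : M} {q : ℕ} (ht : t ^ q = t) (i : ℕ) :
    t ^ q ^ i = t := by
  simpa [pow_iterate, Function.IsFixedPt] using
    (show Function.IsFixedPt (· ^ q) t from ht).iterate i

lemma pow_eq_self_of_coprime {M : Type*} [Monoid M] {z : M} {q m n : ℕ}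
    (hm : z ^ q ^ m = z) (hn : z ^ q ^ n = z) (hmn : Nat.Coprime m n) : z ^ q = z := by
  have hper : ∀ {i}, z ^ q ^ i = z → Function.IsPeriodicPt (· ^ q) i z := fun h => by
    simpa [Function.IsPeriodicPt, Function.IsFixedPt, pow_iterate] using h
  simpa [Function.IsPeriodicPt, Function.IsFixedPt, hmn.gcd_eq_one] using (hper hm).gcd (hper hn)

lemma charP_two_of_card_eq_four_pow {K : Type*} [Field K] [Fintype K] {e : ℕ}
    (hK : Fintype.card K = 4 ^ e) (he : e ≠ 0) : CharP K 2 := by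
  have h4 : (4 : K) ^ e = 0 := by exact_mod_cast hK ▸ FiniteField.cast_card_eq_zero K
  have h2 : (2 : K) ^ (2 * e) = 0 := by rw [pow_mul]; norm_num [h4]
  exact CharTwo.of_one_ne_zero_of_two_eq_zero one_ne_zero (pow_eq_zero_iff (by omega) |>.mp h2)

lemma sum_pow_of_card_eq_four {K : Type*} [Field K] [Fintype K] (hK : Fintype.card K = 4)
    {m : ℕ} (hm : m ≤ 5) : ∑ c : K, c ^ m = if m = 3 then 1 else 0 := by
  have : CharP K 2 := charP_two_of_card_eq_four_pow (e := 1) hK one_ne_zero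
  have hlt : ∀ i < 3, ∑ c : K, c ^ i = 0 := fun i hi =>
    FiniteField.sum_pow_lt_card_sub_one K i (by rw [hK]; exact hi)
  have h4 : ∀ c : K, c ^ 4 = c := fun c => hK ▸ FiniteField.pow_card c
  have h3 : ∑ c : K, c ^ 3 = 1 := by
    classical
    rw [← sum_erase_add _ _ (mem_univ 0), zero_pow three_ne_zero, add_zero,
      sum_congr rfl fun c hc => hK ▸ FiniteField.pow_card_sub_one_eq_one c (ne_of_mem_erase hc),
      sum_const, card_erase_of_mem (mem_univ 0), card_univ, hK]
    rw [nsmul_one, CharTwo.natCast_eq_mod]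
    norm_num
  interval_cases m
  · exact hlt 0 (by norm_num)
  · exact hlt 1 (by norm_num)
  · exact hlt 2 (by norm_num)
  · exact h3
  · simpa [h4] using hlt 1 (by norm_num)
  · simpa [pow_succ _ 4, h4, ← sq] using hlt 2 (by norm_num)

lemma sum_prod_map_add_eq_esymm_two {K R : Type*} [Field K] [Fintype K] [CommRing R]
    (hK : Fintype.card K = 4) (φ : K →+* R) (s : Multiset R) (hs : Multiset.card s = 5) :
    ∑ c : K, (s.map (· + φ c)).prod = s.esymm 2 := by
  have hvieta : ∀ c : K,
      (s.map (· + φ c)).prod = ∑ j ∈ range 6, s.esymm j * φ c ^ (5 - j) := by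
    intro c
    simpa [eval_multiset_prod, eval_finsetSum, hs, add_comm] using
      congrArg (eval (φ c)) (Multiset.prod_X_add_C_eq_sum_esymm s)
  simp_rw [hvieta]
  rw [sum_comm]
  simp_rw [← mul_sum, ← map_pow, ← map_sum]
  rw [sum_congr rfl fun j hj => by rw [sum_pow_of_card_eq_four hK (by omega)]]
  simp [sum_range_succ]

lemma esymm_two_four {R : Type*} [CommSemiring R] (A B C D : R) :
    ({A, B, C, D} : Multiset R).esymm 2 = A * B + A * C + A * D + B * C + B * D + C * D := by
  simp [Multiset.esymm, Multiset.powersetCard_one]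
  ring

lemma esymm_two_five {R : Type*} [CommSemiring R] (A B C D F : R) :
    ({A, B, C, D, F} : Multiset R).esymm 2 =
      A * B + A * C + A * D + A * F + B * C + B * D + B * F + C * D + C * F + D * F := by
  simp [Multiset.esymm, Multiset.powersetCard_one]
  ring

section CharTwo

variable {R : Type*} [CommRing R] [CharP R 2]

lemma add_pow_four_pow (x y : R) (i : ℕ) : (x + y) ^ 4 ^ i = x ^ 4 ^ i + y ^ 4 ^ i := by
  rw [show 4 ^ i = 2 ^ (2 * i) by rw [pow_mul]; norm_num, add_pow_char_pow]

lemma esymm_two_translate (x y₁ y₂ y₃ y₄ : R) :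
    ({x, x + y₁, x + y₂, x + y₃, x + y₄} : Multiset R).esymm 2 =
      ({y₁, y₂, y₃, y₄} : Multiset R).esymm 2 := by
  rw [esymm_two_five, esymm_two_four]
  linear_combination
    (2 * x * (y₁ + y₂ + y₃ + y₄) + 5 * x ^ 2) * CharTwo.two_eq_zero (R := R)

lemma dvd_esymm_two_sub {u A B C D K : R} (h : u ∣ D - (C + K)) :
    u ∣ ({A, B, C, D} : Multiset R).esymm 2 - (A * B + (A + B + C) * K + C ^ 2) := by
  obtain ⟨w, hw⟩ := h
  refine ⟨(A + B + C) * w, ?_⟩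
  rw [esymm_two_four]
  linear_combination (A + B + C) * hw + (A * C + B * C) * CharTwo.two_eq_zero (R := R)

end CharTwo

/-- The paper's `S_d` as a function on an arbitrary ring, so that `S_d = frobSum d X`. -/
def frobSum {R : Type*} [CommRing R] (d : ℕ) (x : R) : R := ∑ i ∈ range d, x ^ 4 ^ i

section FrobSum

variable {R : Type*} [CommRing R]

lemma frobSum_pow_four_sub (d : ℕ) (x : R) :
    frobSum d (x ^ 4) - frobSum d x = x ^ 4 ^ d - x := by
  simp only [frobSum, ← pow_mul, ← pow_succ']
  rw [← sum_sub_distrib, sum_range_sub (fun i => x ^ 4 ^ i), pow_zero, pow_one]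

lemma dvd_frobSum (d : ℕ) (x : R) : x ∣ frobSum d x :=
  dvd_sum fun i _ => dvd_pow_self x (pow_ne_zero i four_ne_zero)

lemma frobSum_add_left (e k : ℕ) (x : R) :
    frobSum (e + k) x = frobSum e x + frobSum k (x ^ 4 ^ e) := by
  simp only [frobSum, sum_range_add, ← pow_mul, ← pow_add]

lemma frobSum_of_pow_four_eq_self {t : R} (ht : t ^ 4 = t) (d : ℕ) : frobSum d t = d * t := by
  simp [frobSum, pow_pow_eq_self ht]

lemma frobSum_mul_of_pow_four_eq_self {t : R} (ht : t ^ 4 = t) (d : ℕ) (y : R) :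
    frobSum d (t * y) = t * frobSum d y := by
  simp [frobSum, mul_pow, pow_pow_eq_self ht, mul_sum]

lemma frobSum_X_comp (d : ℕ) (q : R[X]) :
    (frobSum d X).comp q = frobSum d q := by
  simp [frobSum]

lemma eval_frobSum_X (d : ℕ) (x : R) :
    (frobSum d X).eval x = frobSum d x := by
  simp [frobSum, eval_finsetSum]

variable [CharP R 2]

lemma frobSum_add (d : ℕ) (x y : R) : frobSum d (x + y) = frobSum d x + frobSum d y := by
  simp only [frobSum, add_pow_four_pow, sum_add_distrib]

lemma frobSum_sub (d : ℕ) (x y : R) : frobSum d (x - y) = frobSum d x - frobSum d y := by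
  simp only [CharTwo.sub_eq_add, frobSum_add]

lemma frobSum_sum {ι : Type*} (d : ℕ) (s : Finset ι) (f : ι → R) :
    frobSum d (∑ j ∈ s, f j) = ∑ j ∈ s, frobSum d (f j) :=
  map_sum (AddMonoidHom.mk' (frobSum d) (frobSum_add d)) f s

lemma frobSum_pow_two_pow (d j : ℕ) (x : R) : frobSum d x ^ 2 ^ j = frobSum d (x ^ 2 ^ j) := by
  rw [← iterateFrobenius_def, frobSum, map_sum]
  simp only [iterateFrobenius_def, frobSum, ← pow_mul, mul_comm]

lemma frobSum_sq (d : ℕ) (x : R) : frobSum d x ^ 2 = frobSum d (x ^ 2) :=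
  frobSum_pow_two_pow d 1 x

lemma frobSum_pow_four (d : ℕ) (x : R) : frobSum d x ^ 4 = frobSum d (x ^ 4) :=
  frobSum_pow_two_pow d 2 x

lemma frobSum_pow_four_sub_self (d : ℕ) (x : R) : frobSum d (x ^ 4 - x) = x ^ 4 ^ d - x := by
  rw [frobSum_sub, frobSum_pow_four_sub]

lemma frobSum_of_pow_four_eq_self_of_odd {d : ℕ} (hd : Odd d) {t : R} (ht : t ^ 4 = t) :
    frobSum d t = t := by
  rw [frobSum_of_pow_four_eq_self ht, CharTwo.natCast_eq_ite, if_neg (Nat.not_even_iff_odd.mpr hd),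
    one_mul]

lemma sub_dvd_frobSum_add_sub (e k : ℕ) (x : R) :
    x ^ 4 ^ e - x ∣ frobSum (e + k) x - (frobSum e x + frobSum k x) := by
  rw [frobSum_add_left, add_sub_add_left_eq_sub, ← frobSum_sub]
  exact dvd_frobSum k _

end FrobSum

lemma sum_add_pow_eq_esymm_frobSum {K R : Type*} [Field K] [Fintype K] [CommRing R] [CharP R 2]
    (hK : Fintype.card K = 4) (φ : K →+* R) (x : R) (a b c d : ℕ) :
    ∑ t : K, (x + φ t) ^ (1 + 4 ^ a + 4 ^ b + 4 ^ c + 4 ^ d) =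
      ({frobSum a (x ^ 4 - x), frobSum b (x ^ 4 - x), frobSum c (x ^ 4 - x),
        frobSum d (x ^ 4 - x)} : Multiset R).esymm 2 := by
  have hpow : ∀ (t : K) (i : ℕ), (x + φ t) ^ 4 ^ i = x + frobSum i (x ^ 4 - x) + φ t := by
    intro t i
    have hfix : φ t ^ 4 = φ t := by rw [← map_pow, ← hK, FiniteField.pow_card]
    rw [add_pow_four_pow, pow_pow_eq_self hfix, frobSum_pow_four_sub_self, add_sub_cancel]
  rw [← esymm_two_translate x, ← sum_prod_map_add_eq_esymm_two hK φ _ rfl]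
  refine sum_congr rfl fun t _ => ?_
  simp only [pow_add, pow_one, hpow, Multiset.insert_eq_cons, Multiset.map_cons,
    Multiset.prod_cons, Multiset.map_singleton, Multiset.prod_singleton]
  ring

lemma comp_left_injective_of_natDegree_ne_zero {R : Type*} [CommRing R] [NoZeroDivisors R]
    {q : R[X]} (hq : q.natDegree ≠ 0) : Function.Injective fun p : R[X] => p.comp q := by
  intro p r h
  rw [← sub_eq_zero]
  rcases comp_eq_zero_iff.mp (show (p - r).comp q = 0 by simp only [sub_comp, h, sub_self])
    with h | ⟨-, h⟩
  · exact h
  · exact absurd (congrArg natDegree h) (by simpa using hq)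

lemma eval_eq_of_X_pow_card_sub_X_dvd {K : Type*} [Field K] [Fintype K] {g h : K[X]}
    (hdvd : X ^ Fintype.card K - X ∣ g - h) (x : K) : g.eval x = h.eval x := by
  simpa [sub_eq_zero, FiniteField.pow_card] using eval_dvd (x := x) hdvd

lemma eq_esymm_frobSum_of_comp {K F : Type*} [Field K] [CharP K 2] [Field F] [Fintype F]
    (hF : Fintype.card F = 4) (φ : F →+* K) (a b c d : ℕ) {g : K[X]}
    (hg : ∑ t : F, (X + C (φ t)) ^ (1 + 4 ^ a + 4 ^ b + 4 ^ c + 4 ^ d) = g.comp (X ^ 4 - X)) :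
    g = ({frobSum a X, frobSum b X, frobSum c X, frobSum d X} : Multiset K[X]).esymm 2 := by
  have hdeg : (X ^ 4 - X : K[X]).natDegree = 4 := by compute_degree!
  refine comp_left_injective_of_natDegree_ne_zero (hdeg ▸ four_ne_zero) ?_
  have hsum := sum_add_pow_eq_esymm_frobSum hF (C.comp φ) X a b c d
  simp only [RingHom.comp_apply] at hsum
  simp only [← hg, hsum]
  simp only [esymm_two_four, add_comp, mul_comp, frobSum_X_comp]

section FiniteField

variable {E : Type*} [Field E] [Fintype E] [CharP E 2] {e : ℕ}

lemma frobSum_pow_four_self (hE : Fintype.card E = 4 ^ e) (x : E) :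
    frobSum e x ^ 4 = frobSum e x := by
  rw [frobSum_pow_four, ← sub_eq_zero, frobSum_pow_four_sub, ← hE, FiniteField.pow_card,
    sub_self]

lemma frobSum_pow_four_pow (hE : Fintype.card E = 4 ^ e) (x : E) (j : ℕ) :
    frobSum e (x ^ 4 ^ j) = frobSum e x := by
  induction j with
  | zero => rw [pow_zero, pow_one]
  | succ j ih => rw [pow_succ, pow_mul, ← frobSum_pow_four, ih, frobSum_pow_four_self hE]

lemma frobSum_frobSum (hE : Fintype.card E = 4 ^ e) (k : ℕ) (x : E) :
    frobSum e (frobSum k x) = k * frobSum e x := by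
  change frobSum e (∑ i ∈ range k, x ^ 4 ^ i) = _
  simp [frobSum_sum, frobSum_pow_four_pow hE]

lemma frobSum_quadratic (hE : Fintype.card E = 4 ^ e) (he : Odd e) (k : ℕ) (x : E) :
    frobSum e (frobSum k x ^ 2 + frobSum e x * frobSum k x + frobSum e x ^ 2) =
      frobSum e x ^ 2 := by
  have hT := frobSum_pow_four_self hE x
  have hT2 : (frobSum e x ^ 2) ^ 4 = frobSum e x ^ 2 := by rw [← pow_mul, mul_comm, pow_mul, hT]
  have hk : (k : E) * (k + 1) = 0 := by
    exact_mod_cast (CharP.cast_eq_zero_iff E 2 _).mpr (Nat.even_mul_succ_self k).two_dvd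
  rw [frobSum_add, frobSum_add, ← frobSum_sq, frobSum_mul_of_pow_four_eq_self hT,
    frobSum_frobSum hE, frobSum_of_pow_four_eq_self_of_odd he hT2]
  linear_combination frobSum e x ^ 2 * hk

lemma bijective_frobSum_quadratic (hE : Fintype.card E = 4 ^ e) (he : Odd e) {k : ℕ}
    (hek : Nat.Coprime e k) :
    Function.Bijective fun x : E =>
      frobSum k x ^ 2 + frobSum e x * frobSum k x + frobSum e x ^ 2 := by
  refine Finite.injective_iff_bijective.mp fun x y hxy => ?_
  have htrace : frobSum e x = frobSum e y := CharTwo.sq_inj.mp <| by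
    rw [← frobSum_quadratic hE he k x, ← frobSum_quadratic hE he k y, hxy]
  rw [← htrace] at hxy
  have hkz : frobSum k (x - y) * (frobSum k (x - y) + frobSum e x) = 0 := by
    rw [frobSum_sub]
    linear_combination
      hxy + (frobSum k y ^ 2 - frobSum k x * frobSum k y) * CharTwo.two_eq_zero (R := E)
  have hkz4 : frobSum k (x - y) ^ 4 = frobSum k (x - y) := by
    rcases mul_eq_zero.mp hkz with h | h
    · rw [h, zero_pow four_ne_zero]
    · rw [CharTwo.add_eq_zero.mp h, frobSum_pow_four_self hE]
  have hzk : (x - y) ^ 4 ^ k = x - y := by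
    rw [← sub_eq_zero, ← frobSum_pow_four_sub, ← frobSum_pow_four, hkz4, sub_self]
  have hz4 : (x - y) ^ 4 = x - y := pow_eq_self_of_coprime (hE ▸ FiniteField.pow_card _) hzk hek
  rw [← sub_eq_zero, ← frobSum_of_pow_four_eq_self_of_odd he hz4, frobSum_sub, htrace, sub_self]

end FiniteField

theorem stmt13_general (e a b k : ℕ) (he : 0 < e)
    (E : Type*) [Field E] [Fintype E] (hE : Fintype.card E = 4 ^ e)
    (F4 : Subfield E) [Fintype F4] (hF4 : Fintype.card F4 = 4)
    (n : ℕ) (hn : n = 1 + 4 ^ a + 4 ^ b + 4 ^ e + 4 ^ (e + k))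
    (g : Polynomial E)
    (hg : ∑ c : F4, (X + C (c : E)) ^ n = g.comp (X ^ 4 - X))
    (S : ℕ → Polynomial E) (hS : ∀ d, S d = ∑ i ∈ Finset.range d, X ^ 4 ^ i) :
    (X ^ 4 ^ e - X) ∣ g - (S a * S b + (S a + S b + S e) * S k + S e ^ 2) ∧
    (Nat.gcd e (2 * k) = 1 → a = k ∨ b = k → Function.Bijective fun x : E => g.eval x) := by
  have : CharP E 2 := charP_two_of_card_eq_four_pow hE he.ne'
  obtain rfl : S = fun d => frobSum d X := funext hS
  have hdvd := eq_esymm_frobSum_of_comp hF4 F4.subtype a b e (e + k) (hn ▸ hg) ▸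
    dvd_esymm_two_sub (sub_dvd_frobSum_add_sub e k X)
  refine ⟨hdvd, fun hgcd hak => ?_⟩
  have heval (x : E) :
      g.eval x = frobSum k x ^ 2 + frobSum e x * frobSum k x + frobSum e x ^ 2 := by
    simp only [eval_eq_of_X_pow_card_sub_X_dvd (hE ▸ hdvd) x, eval_add, eval_mul, eval_pow,
      eval_frobSum_X]
    rcases hak with rfl | rfl
    · linear_combination frobSum b x * frobSum a x * CharTwo.two_eq_zero (R := E)
    · linear_combination frobSum a x * frobSum b x * CharTwo.two_eq_zero (R := E)
  have hcop : e.Coprime (2 * k) := hgcd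
  simpa only [heval] using bijective_frobSum_quadratic hE
    (Nat.coprime_two_right.mp hcop.coprime_mul_right_right) hcop.coprime_mul_left_right

/-- Proposition 3.3: for `q = 4` and `n = 1 + q^a + q^b + q^e + q^{e+k}` (with `a,b,e,k`
positive), `g_{n,q} ≡ S_a S_b + (S_a + S_b + S_e)S_k + S_e² (mod X^{q^e} − X)`; moreover
if `gcd(e, 2k) = 1` and `a = k` or `b = k`, then `g_{n,q}` permutes `F_{q^e}`. -/
theorem stmt13 (e a b k : ℕ) (he : 0 < e) (ha : 0 < a) (hb : 0 < b) (hk : 0 < k)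
    (E : Type*) [Field E] [Fintype E] (hE : Fintype.card E = 4 ^ e)
    (F4 : Subfield E) [Fintype F4] (hF4 : Fintype.card F4 = 4)
    (n : ℕ) (hn : n = 1 + 4 ^ a + 4 ^ b + 4 ^ e + 4 ^ (e + k))
    (g : Polynomial E)
    (hg : ∑ c : F4, (X + C (c : E)) ^ n = g.comp (X ^ 4 - X))
    (S : ℕ → Polynomial E) (hS : ∀ d, S d = ∑ i ∈ Finset.range d, X ^ 4 ^ i) :
    (X ^ 4 ^ e - X) ∣ g - (S a * S b + (S a + S b + S e) * S k + S e ^ 2) ∧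
    (Nat.gcd e (2 * k) = 1 → a = k ∨ b = k → Function.Bijective fun x : E => g.eval x) :=
  stmt13_general e a b k he E hE F4 hF4 n hn g hg S hS
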